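/- For every m = (m₁,…,m_ℓ) ∈ ℕ^ℓ it holds that h(A^m) = ∏_{k=1}^{ℓ} (1 − q^{2k})/(1 − q^{2(k + Σ_{i=1}^{k} m_i)}). -/

import Mathlib

noncomputable section

/-- The partial sum `A_j = Σ_{i=1}^{j} z_i z_i*` (indices of `z` shifted to start at `0`). -/
def Apart {A : Type*} [Ring A] [StarRing A] {N : ℕ} (z : Fin N → A) (j : ℕ) : A :=
  ∑ i ∈ Finset.univ.filter (fun i : Fin N => (i : ℕ) < j), z i * star (z i)

/-- The ordered monomial `A^m = A₁^{m₁} ⋯ A_ℓ^{m_ℓ}`. -/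
def Apow {A : Type*} [Ring A] [StarRing A] {ℓ : ℕ} (z : Fin (ℓ + 1) → A) (m : Fin ℓ → ℕ) : A :=
  ((List.finRange ℓ).map (fun k : Fin ℓ => Apart z ((k : ℕ) + 1) ^ m k)).prod

/-! Write `A_{k+1} = A_k + z_k z_k*`. The modular relation for `z_k`, together with
`A_k z_k = q² z_k A_k` and `z_k* z_k = z_k z_k* + (1 - q²) A_k`, gives
`(1 - q^{2(k+n)}) h(A_k^n X) = (1 - q^{2k}) h(A_{k+1}^n X)` for every `X` commuting with `z_k`.
As `z_k` commutes with every `A_j`, `j > k`, this pushes the leading power `A_1^{m_1}` of `A^m`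
into `A_2^{m_2}`, then `A_2^{m_1 + m_2}` into `A_3^{m_3}`, and so on up to `A_N = 1`;
each push contributes one factor of the product. -/

open Finset

theorem pow_mul_eq_smul_mul_pow {R A : Type*} [CommSemiring R] [Semiring A] [Algebra R A]
    {a b : A} {c : R} (hab : a * b = c • (b * a)) (n : ℕ) :
    a ^ n * b = c ^ n • (b * a ^ n) := by
  induction n with
  | zero => simp
  | succ n ih =>
    calc a ^ (n + 1) * b = c • ((a ^ n * b) * a) := by
          rw [pow_succ, mul_assoc, hab, mul_smul_comm, mul_assoc]
      _ = c ^ (n + 1) • (b * a ^ (n + 1)) := by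
          rw [ih, smul_mul_assoc, smul_smul, mul_assoc, ← pow_succ, ← pow_succ']

section Apart

variable {A : Type*} [Ring A] [StarRing A] {N : ℕ} (z : Fin N → A)

@[simp]
lemma Apart_zero : Apart z 0 = 0 := by
  simp [Apart]

lemma Apart_succ (k : Fin N) : Apart z (k + 1) = Apart z k + z k * star (z k) := by
  have : univ.filter (fun i : Fin N => (i : ℕ) < k + 1) =
      insert k (univ.filter fun i : Fin N => (i : ℕ) < k) := by
    ext i
    simp only [mem_filter, mem_insert, mem_univ, true_and, Fin.ext_iff]
    omega
  rw [Apart, this, sum_insert (by simp), Apart, add_comm]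

lemma Apart_of_le {j : ℕ} (hj : N ≤ j) : Apart z j = ∑ i, z i * star (z i) := by
  rw [Apart, filter_true_of_mem fun i _ => i.isLt.trans_le hj]

lemma isSelfAdjoint_Apart (j : ℕ) : IsSelfAdjoint (Apart z j) :=
  isSelfAdjoint_sum _ fun i _ => .mul_star_self (z i)

variable {z}

lemma Commute.Apart_left {b : A} {j : ℕ}
    (hb : ∀ i : Fin N, (i : ℕ) < j → Commute (z i) b ∧ Commute (star (z i)) b) :
    Commute (Apart z j) b :=
  Commute.sum_left _ _ _ fun i hi =>
    (hb i (mem_filter.mp hi).2).1.mul_left (hb i (mem_filter.mp hi).2).2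

variable (z) in
def ApowFrom (t : ℕ) {r : ℕ} (m : Fin r → ℕ) : A :=
  (List.ofFn fun k : Fin r => Apart z (k + t) ^ m k).prod

lemma ApowFrom_one {ℓ : ℕ} (z : Fin (ℓ + 1) → A) (m : Fin ℓ → ℕ) :
    ApowFrom z 1 m = Apow z m := by
  rw [ApowFrom, Apow, List.ofFn_eq_map]

@[simp]
lemma ApowFrom_nil (t : ℕ) (m : Fin 0 → ℕ) : ApowFrom z t m = 1 := by
  simp [ApowFrom]

lemma ApowFrom_succ (t : ℕ) {r : ℕ} (m : Fin (r + 1) → ℕ) :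
    ApowFrom z t m = Apart z t ^ m 0 * ApowFrom z (t + 1) (Fin.tail m) := by
  simp only [ApowFrom, List.ofFn_succ, List.prod_cons, Fin.val_zero, zero_add, Fin.val_succ,
    Fin.tail, add_right_comm _ 1 t, add_assoc]

lemma Commute.ApowFrom_right {c : A} {t r : ℕ} (m : Fin r → ℕ)
    (hc : ∀ j, t ≤ j → Commute c (Apart z j)) : Commute c (ApowFrom z t m) :=
  Commute.list_prod_right _ _ fun _ hx => by
    obtain ⟨k, rfl⟩ := List.mem_ofFn.mp hx
    exact (hc _ (Nat.le_add_left t k)).pow_right _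

end Apart

section Relations

variable {A : Type*} [Ring A] [Algebra ℂ A] [StarRing A] {q : ℝ}

lemma star_mul_self_eq_add_smul_Apart {ℓ : ℕ} {z : Fin (ℓ + 1) → A}
    (hrel : ∀ j : Fin ℓ,
      star (z j.succ) * z j.succ - z j.succ * star (z j.succ)
        = (1 - (q : ℂ) ^ 2) •
            ∑ i ∈ Finset.univ.filter (fun i : Fin (ℓ + 1) => (i : ℕ) ≤ (j : ℕ)),
              z i * star (z i))
    (hz0 : star (z 0) * z 0 = z 0 * star (z 0)) (k : Fin (ℓ + 1)) :
    star (z k) * z k = z k * star (z k) + (1 - (q : ℂ) ^ 2) • Apart z k := by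
  induction k using Fin.cases with
  | zero => simpa using hz0
  | succ j =>
    rw [← sub_eq_iff_eq_add', hrel j, Apart]
    congr 2
    ext i
    simp only [mem_filter, mem_univ, true_and, Fin.val_succ]
    omega

variable {N : ℕ} {z : Fin N → A}

lemma mul_star_self_mul_of_lt
    (hcomm : ∀ i j : Fin N, i < j → z i * z j = (q : ℂ) • (z j * z i))
    (hstar : ∀ i j : Fin N, i ≠ j → star (z i) * z j = (q : ℂ) • (z j * star (z i)))
    {i k : Fin N} (hik : i < k) :
    z i * star (z i) * z k = ((q : ℂ) ^ 2) • (z k * (z i * star (z i))) := by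
  rw [mul_assoc, hstar i k hik.ne, mul_smul_comm, ← mul_assoc, hcomm i k hik, smul_mul_assoc,
    smul_smul, ← pow_two, mul_assoc]

lemma Apart_mul_of_le
    (hcomm : ∀ i j : Fin N, i < j → z i * z j = (q : ℂ) • (z j * z i))
    (hstar : ∀ i j : Fin N, i ≠ j → star (z i) * z j = (q : ℂ) • (z j * star (z i)))
    {j : ℕ} {k : Fin N} (hjk : j ≤ k) :
    Apart z j * z k = ((q : ℂ) ^ 2) • (z k * Apart z j) := by
  induction j with
  | zero => simp
  | succ j ih =>
    have hjk' : (⟨j, by omega⟩ : Fin N) < k := Fin.lt_def.mpr hjk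
    rw [Apart_succ z ⟨j, _⟩, add_mul, mul_add, smul_add, ih (by omega),
      mul_star_self_mul_of_lt hcomm hstar hjk']

lemma commute_mul_star_self_of_lt (hq : (q : ℂ) ≠ 0)
    (hcomm : ∀ i j : Fin N, i < j → z i * z j = (q : ℂ) • (z j * z i))
    (hstar : ∀ i j : Fin N, i ≠ j → star (z i) * z j = (q : ℂ) • (z j * star (z i)))
    {k i : Fin N} (hki : k < i) :
    Commute (z k) (z i * star (z i)) := by
  have h : z k * star (z i) = (q : ℂ)⁻¹ • (star (z i) * z k) := by
    rw [hstar i k hki.ne', smul_smul, inv_mul_cancel₀ hq, one_smul]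
  calc z k * (z i * star (z i)) = (q : ℂ) • (z i * (z k * star (z i))) := by
        rw [← mul_assoc, hcomm k i hki, smul_mul_assoc, mul_assoc]
    _ = z i * star (z i) * z k := by
        rw [h, mul_smul_comm, smul_smul, mul_inv_cancel₀ hq, one_smul, mul_assoc]

lemma commute_Apart_succ_self
    (hcomm : ∀ i j : Fin N, i < j → z i * z j = (q : ℂ) • (z j * z i))
    (hstar : ∀ i j : Fin N, i ≠ j → star (z i) * z j = (q : ℂ) • (z j * star (z i)))
    (hself : ∀ k : Fin N, star (z k) * z k = z k * star (z k) + (1 - (q : ℂ) ^ 2) • Apart z k)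
    (k : Fin N) :
    Commute (z k) (Apart z (k + 1)) := by
  have hzz : z k * (z k * star (z k)) =
      z k * star (z k) * z k - (1 - (q : ℂ) ^ 2) • (z k * Apart z k) := by
    conv_lhs => rw [eq_sub_of_add_eq (hself k).symm, mul_sub, mul_smul_comm]
    rw [mul_assoc]
  rw [Commute, SemiconjBy, Apart_succ, mul_add, add_mul, Apart_mul_of_le hcomm hstar le_rfl, hzz]
  module

lemma commute_Apart_of_lt (hq : (q : ℂ) ≠ 0)
    (hcomm : ∀ i j : Fin N, i < j → z i * z j = (q : ℂ) • (z j * z i))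
    (hstar : ∀ i j : Fin N, i ≠ j → star (z i) * z j = (q : ℂ) • (z j * star (z i)))
    (hself : ∀ k : Fin N, star (z k) * z k = z k * star (z k) + (1 - (q : ℂ) ^ 2) • Apart z k)
    {k : Fin N} {j : ℕ} (hkj : (k : ℕ) < j) :
    Commute (z k) (Apart z j) := by
  induction j with
  | zero => omega
  | succ j ih =>
    obtain hjN | hNj := lt_or_ge j N
    · obtain hkj' | rfl := (Nat.lt_succ_iff.mp hkj).lt_or_eq
      · rw [Apart_succ z ⟨j, hjN⟩]
        exact (ih hkj').add_right
          (commute_mul_star_self_of_lt hq hcomm hstar (Fin.lt_def.mpr hkj'))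
      · exact commute_Apart_succ_self hcomm hstar hself k
    · rw [Apart_of_le z (by omega), ← Apart_of_le z hNj]
      exact ih (by omega)

lemma commute_star_Apart_of_lt (hq : (q : ℂ) ≠ 0)
    (hcomm : ∀ i j : Fin N, i < j → z i * z j = (q : ℂ) • (z j * z i))
    (hstar : ∀ i j : Fin N, i ≠ j → star (z i) * z j = (q : ℂ) • (z j * star (z i)))
    (hself : ∀ k : Fin N, star (z k) * z k = z k * star (z k) + (1 - (q : ℂ) ^ 2) • Apart z k)
    {k : Fin N} {j : ℕ} (hkj : (k : ℕ) < j) :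
    Commute (star (z k)) (Apart z j) := by
  simpa only [(isSelfAdjoint_Apart z j).star_eq] using
    (commute_Apart_of_lt hq hcomm hstar hself hkj).star_star

lemma commute_Apart_Apart (hq : (q : ℂ) ≠ 0)
    (hcomm : ∀ i j : Fin N, i < j → z i * z j = (q : ℂ) • (z j * z i))
    (hstar : ∀ i j : Fin N, i ≠ j → star (z i) * z j = (q : ℂ) • (z j * star (z i)))
    (hself : ∀ k : Fin N, star (z k) * z k = z k * star (z k) + (1 - (q : ℂ) ^ 2) • Apart z k)
    (i j : ℕ) :
    Commute (Apart z i) (Apart z j) := by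
  wlog hij : i ≤ j generalizing i j
  · exact (this j i (by omega)).symm
  exact Commute.Apart_left fun a ha =>
    ⟨commute_Apart_of_lt hq hcomm hstar hself (by omega),
      commute_star_Apart_of_lt hq hcomm hstar hself (by omega)⟩

end Relations

section Haar

variable {A : Type*} [Ring A] [Algebra ℂ A] [StarRing A] {q : ℝ} {N : ℕ} {z : Fin N → A}
  {h : A →ₗ[ℂ] ℂ}

lemma haar_Apart_pow_succ_mul
    (hcomm : ∀ i j : Fin N, i < j → z i * z j = (q : ℂ) • (z j * z i))
    (hstar : ∀ i j : Fin N, i ≠ j → star (z i) * z j = (q : ℂ) • (z j * star (z i)))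
    (hself : ∀ k : Fin N, star (z k) * z k = z k * star (z k) + (1 - (q : ℂ) ^ 2) • Apart z k)
    (hmod : ∀ (x : A) (j : Fin N), h (z j * x) = (q : ℂ) ^ (2 * (j : ℕ)) * h (x * z j))
    (k : Fin N) (n : ℕ) {X : A} (hX : Commute (z k) X) :
    (1 - (q : ℂ) ^ (2 * (k + n + 1))) * h (Apart z k ^ (n + 1) * X)
      = (1 - (q : ℂ) ^ (2 * (k + n))) * h (Apart z (k + 1) * (Apart z k ^ n * X)) := by
  have hP : star (z k) * (Apart z k ^ n * X) * z k =
      ((q : ℂ) ^ 2) ^ n • (star (z k) * z k * (Apart z k ^ n * X)) := by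
    rw [mul_assoc, mul_assoc, ← hX.eq, ← mul_assoc (Apart z k ^ n),
      pow_mul_eq_smul_mul_pow (Apart_mul_of_le hcomm hstar le_rfl), smul_mul_assoc,
      mul_smul_comm, mul_assoc, mul_assoc]
  -- `hmod` cycles `z k` to the right end; moving it back through `Apart z k ^ n` costs `q ^ (2 n)`
  have key : h (z k * star (z k) * (Apart z k ^ n * X)) = (q : ℂ) ^ (2 * (k + n)) *
      (h (z k * star (z k) * (Apart z k ^ n * X))
        + (1 - (q : ℂ) ^ 2) * h (Apart z k ^ (n + 1) * X)) := by
    conv_lhs => rw [mul_assoc, hmod, hP, hself, add_mul, smul_mul_assoc, ← mul_assoc (Apart z k),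
      ← pow_succ', map_smul, map_add, map_smul, smul_eq_mul, smul_eq_mul]
    ring
  have hsplit : h (Apart z (k + 1) * (Apart z k ^ n * X))
      = h (Apart z k ^ (n + 1) * X) + h (z k * star (z k) * (Apart z k ^ n * X)) := by
    rw [Apart_succ, add_mul, map_add, ← mul_assoc, ← pow_succ']
  rw [hsplit]
  linear_combination -key

lemma haar_Apart_pow_mul (hq : (q : ℂ) ≠ 0)
    (hcomm : ∀ i j : Fin N, i < j → z i * z j = (q : ℂ) • (z j * z i))
    (hstar : ∀ i j : Fin N, i ≠ j → star (z i) * z j = (q : ℂ) • (z j * star (z i)))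
    (hself : ∀ k : Fin N, star (z k) * z k = z k * star (z k) + (1 - (q : ℂ) ^ 2) • Apart z k)
    (hmod : ∀ (x : A) (j : Fin N), h (z j * x) = (q : ℂ) ^ (2 * (j : ℕ)) * h (x * z j))
    (k : Fin N) (n : ℕ) {X : A} (hX : Commute (z k) X) :
    (1 - (q : ℂ) ^ (2 * (k + n))) * h (Apart z k ^ n * X)
      = (1 - (q : ℂ) ^ (2 * (k : ℕ))) * h (Apart z (k + 1) ^ n * X) := by
  induction n generalizing X with
  | zero => simp
  | succ n ih =>
    have hX' : Commute (z k) (Apart z (k + 1) * X) :=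
      (commute_Apart_of_lt hq hcomm hstar hself (Nat.lt_succ_self k)).mul_right hX
    rw [← add_assoc, haar_Apart_pow_succ_mul hcomm hstar hself hmod k n hX, ← mul_assoc,
      ((commute_Apart_Apart hq hcomm hstar hself _ _).pow_right n).eq, mul_assoc, ih hX',
      ← mul_assoc, ← pow_succ]

end Haar

lemma one_sub_pow_ne_zero {q : ℝ} (hq : q ∈ Set.Ioo 0 1) {n : ℕ} (hn : n ≠ 0) :
    (1 : ℂ) - (q : ℂ) ^ n ≠ 0 := by
  rw [sub_ne_zero, ne_comm, ← Complex.ofReal_pow, Ne, Complex.ofReal_eq_one]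
  exact (pow_lt_one₀ hq.1.le hq.2 hn).ne

lemma Fin.sum_filter_val_le_zero {M : Type*} [AddCommMonoid M] {r : ℕ} (f : Fin (r + 1) → M) :
    ∑ i ∈ univ.filter (fun i : Fin (r + 1) => (i : ℕ) ≤ ((0 : Fin (r + 1)) : ℕ)), f i
      = f 0 := by
  rw [sum_filter, Fin.sum_univ_succ]
  simp

lemma Fin.sum_filter_val_le_succ {M : Type*} [AddCommMonoid M] {r : ℕ} (f : Fin (r + 1) → M)
    (k : Fin r) :
    ∑ i ∈ univ.filter (fun i : Fin (r + 1) => (i : ℕ) ≤ (k.succ : ℕ)), f i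
      = f 0 + ∑ i ∈ univ.filter (fun i : Fin r => (i : ℕ) ≤ (k : ℕ)), f i.succ := by
  rw [sum_filter, sum_filter, Fin.sum_univ_succ]
  simp

theorem haar_Apart_pow_mul_ApowFrom {A : Type*} [Ring A] [Algebra ℂ A] [StarRing A]
    {q : ℝ} (hq : q ∈ Set.Ioo 0 1) {N : ℕ} {z : Fin N → A}
    (hcomm : ∀ i j : Fin N, i < j → z i * z j = (q : ℂ) • (z j * z i))
    (hstar : ∀ i j : Fin N, i ≠ j → star (z i) * z j = (q : ℂ) • (z j * star (z i)))
    (hself : ∀ k : Fin N, star (z k) * z k = z k * star (z k) + (1 - (q : ℂ) ^ 2) • Apart z k)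
    (hsum : ∑ i, z i * star (z i) = 1)
    {h : A →ₗ[ℂ] ℂ} (h1 : h 1 = 1)
    (hmod : ∀ (x : A) (j : Fin N), h (z j * x) = (q : ℂ) ^ (2 * (j : ℕ)) * h (x * z j))
    {r : ℕ} (m : Fin r → ℕ) {t : ℕ} (ht : 1 ≤ t) (htr : t + r = N) (M : ℕ) :
    h (Apart z t ^ M * ApowFrom z t m)
      = ∏ k : Fin r, (1 - (q : ℂ) ^ (2 * (k + t)))
          / (1 - (q : ℂ) ^ (2 * (k + t
              + (M + ∑ i ∈ univ.filter (fun i : Fin r => (i : ℕ) ≤ (k : ℕ)), m i)))) := by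
  have hq0 : (q : ℂ) ≠ 0 := Complex.ofReal_ne_zero.mpr hq.1.ne'
  induction r generalizing t M with
  | zero =>
    rw [Apart_of_le z (by omega), hsum]
    simp [h1]
  | succ r ih =>
    let t' : Fin N := ⟨t, by omega⟩
    have hR : Commute (z t') (ApowFrom z (t + 1) (Fin.tail m)) :=
      Commute.ApowFrom_right _ fun j hj => commute_Apart_of_lt hq0 hcomm hstar hself hj
    have hstep : h (Apart z t ^ (M + m 0) * ApowFrom z (t + 1) (Fin.tail m))
        = (1 - (q : ℂ) ^ (2 * t)) / (1 - (q : ℂ) ^ (2 * (t + (M + m 0))))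
          * h (Apart z (t + 1) ^ (M + m 0) * ApowFrom z (t + 1) (Fin.tail m)) := by
      rw [div_mul_eq_mul_div, eq_div_iff (one_sub_pow_ne_zero hq (by omega)), mul_comm]
      exact haar_Apart_pow_mul hq0 hcomm hstar hself hmod t' (M + m 0) hR
    rw [ApowFrom_succ, ← mul_assoc, ← pow_add, hstep,
      ih (Fin.tail m) (by omega) (by omega), Fin.prod_univ_succ, Fin.sum_filter_val_le_zero]
    simp only [Fin.sum_filter_val_le_succ]
    simp only [Fin.val_zero, Fin.val_succ, Fin.tail]
    ring_nf

theorem haar_apply_Apow_general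
    {A : Type*} [Ring A] [Algebra ℂ A] [StarRing A]
    (q : ℝ) (hq : q ∈ Set.Ioo (0 : ℝ) 1) (ℓ : ℕ)
    (z : Fin (ℓ + 1) → A)
    (hcomm : ∀ i j : Fin (ℓ + 1), i < j → z i * z j = (q : ℂ) • (z j * z i))
    (hstar : ∀ i j : Fin (ℓ + 1), i ≠ j → star (z i) * z j = (q : ℂ) • (z j * star (z i)))
    (hrel : ∀ j : Fin ℓ,
      star (z j.succ) * z j.succ - z j.succ * star (z j.succ)
        = (1 - (q : ℂ) ^ 2) •
            ∑ i ∈ Finset.univ.filter (fun i : Fin (ℓ + 1) => (i : ℕ) ≤ (j : ℕ)),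
              z i * star (z i))
    (hz0 : star (z 0) * z 0 = z 0 * star (z 0))
    (hsum : ∑ i : Fin (ℓ + 1), z i * star (z i) = 1)
    (h : A →ₗ[ℂ] ℂ) (h1 : h 1 = 1)
    (hmod : ∀ (x : A) (j : Fin (ℓ + 1)),
      h (z j * x) = (q : ℂ) ^ (2 * (j : ℕ)) * h (x * z j))
    (m : Fin ℓ → ℕ) :
    h (Apow z m)
      = ∏ k : Fin ℓ,
          (1 - (q : ℂ) ^ (2 * ((k : ℕ) + 1)))
            / (1 - (q : ℂ) ^ (2 * ((k : ℕ) + 1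
                + ∑ i ∈ Finset.univ.filter (fun i : Fin ℓ => (i : ℕ) ≤ (k : ℕ)), m i))) := by
  have hself := star_mul_self_eq_add_smul_Apart hrel hz0
  simpa [ApowFrom_one] using
    haar_Apart_pow_mul_ApowFrom hq hcomm hstar hself hsum h1 hmod m le_rfl (add_comm 1 ℓ) 0

/-- Let `z₁,…,z_N` satisfy the quantum sphere relations in a unital
`ℂ`-`*`-algebra and let `h` be a normalized linear functional satisfying the modular
relations for the Haar state of `SU_q(N)`. Then for every `m ∈ ℕ^ℓ` one has
`h(A^m) = ∏_{k=1}^{ℓ} (1 − q^{2k})/(1 − q^{2(k + Σ_{i=1}^{k} m_i)})`.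
(The indices of `z` and `m` are shifted to start at `0`.) -/
theorem haar_apply_Apow
    {A : Type*} [Ring A] [Algebra ℂ A] [StarRing A] [StarModule ℂ A]
    (q : ℝ) (hq : q ∈ Set.Ioo (0 : ℝ) 1) (ℓ : ℕ) (hℓ : 1 ≤ ℓ)
    (z : Fin (ℓ + 1) → A)
    (hcomm : ∀ i j : Fin (ℓ + 1), i < j → z i * z j = (q : ℂ) • (z j * z i))
    (hstar : ∀ i j : Fin (ℓ + 1), i ≠ j → star (z i) * z j = (q : ℂ) • (z j * star (z i)))
    (hrel : ∀ j : Fin ℓ,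
      star (z j.succ) * z j.succ - z j.succ * star (z j.succ)
        = (1 - (q : ℂ) ^ 2) •
            ∑ i ∈ Finset.univ.filter (fun i : Fin (ℓ + 1) => (i : ℕ) ≤ (j : ℕ)),
              z i * star (z i))
    (hz0 : star (z 0) * z 0 = z 0 * star (z 0))
    (hsum : ∑ i : Fin (ℓ + 1), z i * star (z i) = 1)
    (h : A →ₗ[ℂ] ℂ) (h1 : h 1 = 1)
    (hmod : ∀ (x : A) (j : Fin (ℓ + 1)),
      h (z j * x) = (q : ℂ) ^ (2 * (j : ℕ)) * h (x * z j))
    (hmodstar : ∀ (x : A) (j : Fin (ℓ + 1)),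
      h (star (z j) * x) = ((q : ℂ) ^ (2 * (j : ℕ)))⁻¹ * h (x * star (z j)))
    (m : Fin ℓ → ℕ) :
    h (Apow z m)
      = ∏ k : Fin ℓ,
          (1 - (q : ℂ) ^ (2 * ((k : ℕ) + 1)))
            / (1 - (q : ℂ) ^ (2 * ((k : ℕ) + 1
                + ∑ i ∈ Finset.univ.filter (fun i : Fin ℓ => (i : ℕ) ≤ (k : ℕ)), m i))) :=
  haar_apply_Apow_general q hq ℓ z hcomm hstar hrel hz0 hsum h h1 hmod m

end
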